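/- One-mode model of the a priori bound: let a, b ≥ 0 and ε ∈ (0,1) with constants satisfying 1/2 − c₁α − c₂/C − c₃α²C ≥ 0 for C = c̄Λ and α, αΛ small; then the inequality P² + 4√α·Re(P·D) + α(π⁻¹Λ² + 2D*D + DD + D*D*) + H ≥ απ⁻¹Λ² − const·α²Λ³ + ½(P² + H) holds as quadratic forms, given the operator inequalities 4√α Re(P·D) ≥ −½P² − 8αD*D, D*D ≤ (2Λ/π)H, DD* ≤ D*D + π⁻¹Λ², and α(DD + D*D*) ≥ −C⁻¹D*D − α²C·DD*. -/
import Mathlib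


open Real

/-- One-mode model of the a priori lower bound (Lemma 3.1): given the
quadratic-form values (at a normalized state) `tP = ⟨P²⟩`, `tH = ⟨H⟩`,
`tDD = ⟨D*D⟩`, `tDDs = ⟨DD*⟩`, `tcross = Re⟨P·D⟩`, `tpair = Re⟨DD + D*D*⟩`,
and the operator inequalities
`4√α Re⟨P·D⟩ ≥ −½⟨P²⟩ − 8α⟨D*D⟩`, `⟨D*D⟩ ≤ (2Λ/π)⟨H⟩`,
`⟨DD*⟩ ≤ ⟨D*D⟩ + π⁻¹Λ²`, `α⟨DD + D*D*⟩ ≥ −C⁻¹⟨D*D⟩ − α²C⟨DD*⟩` with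
`C = c̄Λ`, together with the smallness condition
`½ − (6α + C⁻¹ + α²C)(2Λ/π) ≥ 0`, one gets
`⟨T₀⟩ ≥ απ⁻¹Λ² − (c̄/π)α²Λ³ + ½(⟨P²⟩ + ⟨H⟩)`. -/
theorem apriori_lower_bound (α Λ cbar C tP tH tDD tDDs tcross tpair : ℝ)
    (hα : 0 < α) (hΛ : 0 < Λ) (hcbar : 0 < cbar) (hCdef : C = cbar * Λ)
    (hPnn : 0 ≤ tP) (hHnn : 0 ≤ tH) (hDDnn : 0 ≤ tDD) (hDDsnn : 0 ≤ tDDs)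
    (h1 : 4 * Real.sqrt α * tcross ≥ -(1 / 2) * tP - 8 * α * tDD)
    (h2 : tDD ≤ (2 * Λ / π) * tH)
    (h3 : tDDs ≤ tDD + π⁻¹ * Λ ^ 2)
    (h4 : α * tpair ≥ -C⁻¹ * tDD - α ^ 2 * C * tDDs)
    (hsmall : 0 ≤ 1 / 2 - (6 * α + C⁻¹ + α ^ 2 * C) * (2 * Λ / π)) :
    tP + 4 * Real.sqrt α * tcross + α * (π⁻¹ * Λ ^ 2 + 2 * tDD + tpair) + tH ≥
      α * π⁻¹ * Λ ^ 2 - (cbar / π) * α ^ 2 * Λ ^ 3 + (1 / 2) * (tP + tH) := by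
  have hpi : (0:ℝ) < π := Real.pi_pos
  have hC : 0 < C := hCdef ▸ mul_pos hcbar hΛ
  have hcoef : 0 ≤ 6 * α + C⁻¹ + α ^ 2 * C := by positivity
  have hDDH : (6 * α + C⁻¹ + α ^ 2 * C) * tDD ≤ (6 * α + C⁻¹ + α ^ 2 * C) * ((2 * Λ / π) * tH) :=
    mul_le_mul_of_nonneg_left h2 hcoef
  have key : (6 * α + C⁻¹ + α ^ 2 * C) * ((2 * Λ / π) * tH) ≤ (1/2) * tH := by
    nlinarith [mul_nonneg hsmall hHnn]
  have hCΛ : α ^ 2 * C * (π⁻¹ * Λ ^ 2) = (cbar / π) * α ^ 2 * Λ ^ 3 := by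
    rw [hCdef]; field_simp
  nlinarith [mul_le_mul_of_nonneg_left h3 (by positivity : (0:ℝ) ≤ α ^ 2 * C)]
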